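/- Let Δ be a ${\rm CM}_t$ simplicial complex for some t ≥ 0, with contraction Γ by α = (k_1,…,k_n). If k_i ≥ t for all i and Γ is pure, then Γ is Buchsbaum (i.e., ${\rm CM}_1$). -/

import Mathlib

open Finset

/-- An abstract simplicial complex on vertex type `V`: a downward closed
family of finite subsets of `V`. -/
structure AbstractComplex (V : Type*) where
  faces : Set (Finset V)
  down_closed : ∀ {s t : Finset V}, s ∈ faces → t ⊆ s → t ∈ faces

namespace AbstractComplex

variable {V : Type*}

/-- A facet is a maximal face. -/
def IsFacet (Δ : AbstractComplex V) (s : Finset V) : Prop :=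
  s ∈ Δ.faces ∧ ∀ t ∈ Δ.faces, s ⊆ t → s = t

/-- A complex is pure if all facets have the same cardinality. -/
def IsPure (Δ : AbstractComplex V) : Prop :=
  ∀ s t : Finset V, Δ.IsFacet s → Δ.IsFacet t → s.card = t.card

/-- The link of a (potential) face `F`. -/
def link [DecidableEq V] (Δ : AbstractComplex V) (F : Finset V) : AbstractComplex V where
  faces := {G | G ∩ F = ∅ ∧ G ∪ F ∈ Δ.faces}
  down_closed := by
    rintro s t ⟨h1, h2⟩ hts
    refine ⟨subset_empty.mp ?_, Δ.down_closed h2 (union_subset_union hts subset_rfl)⟩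
    exact h1 ▸ inter_subset_inter hts subset_rfl

/-- The faces of cardinality `q` (i.e. dimension `q - 1`). -/
abbrev Face (Δ : AbstractComplex V) (q : ℕ) := {s : Finset V // s ∈ Δ.faces ∧ s.card = q}

/-- The simplicial boundary map on reduced chains with coefficients in `K`,
from chains spanned by faces of cardinality `q+1` to those spanned by faces of
cardinality `q`. -/
noncomputable def boundary (K : Type*) [Field K] [LinearOrder V]
    (Δ : AbstractComplex V) (q : ℕ) :
    (Δ.Face (q + 1) →₀ K) →ₗ[K] (Δ.Face q →₀ K) :=
  Finsupp.lsum K fun s => LinearMap.toSpanSingleton K _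
    (∑ x ∈ s.1.attach,
      ((-1 : K) ^ (s.1.filter (fun y => y < x.1)).card) •
        Finsupp.single (⟨s.1.erase x.1,
          Δ.down_closed s.2.1 (erase_subset _ _), by
            rw [card_erase_of_mem x.2, s.2.2]; omega⟩ : Δ.Face q) (1 : K))

/-- `Δ.RHTriv K i` says that the `i`-th reduced simplicial homology of `Δ`
with coefficients in `K` vanishes. -/
def RHTriv (K : Type*) [Field K] [LinearOrder V] (Δ : AbstractComplex V) : ℤ → Prop
  | Int.ofNat i =>
      LinearMap.ker (Δ.boundary K i) ≤ LinearMap.range (Δ.boundary K (i + 1))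
  | Int.negSucc 0 => ⊤ ≤ LinearMap.range (Δ.boundary K 0)
  | Int.negSucc (_ + 1) => True

/-- `Δ.dimLT i` means `i < dim Δ`. -/
def dimLT (Δ : AbstractComplex V) (i : ℤ) : Prop :=
  ∃ s ∈ Δ.faces, i + 2 ≤ (s.card : ℤ)

/-- Cohen–Macaulayness over `K`, via Reisner's criterion. -/
def IsCM (K : Type*) [Field K] [LinearOrder V] (Δ : AbstractComplex V) : Prop :=
  ∀ F ∈ Δ.faces, ∀ i : ℤ, (Δ.link F).dimLT i → (Δ.link F).RHTriv K i

/-- `CM_t`: pure, and the link of every face of cardinality at least `t`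
is Cohen–Macaulay. -/
def IsCMt (K : Type*) [Field K] [LinearOrder V] (t : ℕ) (Δ : AbstractComplex V) : Prop :=
  Δ.IsPure ∧ ∀ F ∈ Δ.faces, t ≤ F.card → IsCM K (Δ.link F)

/-- Buchsbaum-ness: pure and the reduced homology of the link of every nonempty
face vanishes below its dimension. -/
def IsBuchsbaum (K : Type*) [Field K] [LinearOrder V] (Δ : AbstractComplex V) : Prop :=
  Δ.IsPure ∧ ∀ G ∈ Δ.faces, G ≠ ∅ →
    ∀ i : ℤ, (Δ.link G).dimLT i → (Δ.link G).RHTriv K i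

end AbstractComplex

/-- The expansion `F^α` of a finite vertex set. -/
def expandSet {V : Type*} (α : V → ℕ) (F : Finset V) : Finset (Σ i, Fin (α i)) :=
  F.sigma fun _ => Finset.univ

namespace AbstractComplex

/-- The expansion `Δ^α` of a simplicial complex: the complex generated by the
expansions of the facets of `Δ`. -/
def expand {V : Type*} (Δ : AbstractComplex V) (α : V → ℕ) :
    AbstractComplex (Σ i, Fin (α i)) where
  faces := {σ | ∃ F, Δ.IsFacet F ∧ σ ⊆ expandSet α F}
  down_closed := fun ⟨F, hF, hsub⟩ hts => ⟨F, hF, hts.trans hsub⟩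

end AbstractComplex

/-- A linear order on the expanded vertex set (lexicographic). -/
noncomputable instance sigmaFinLinearOrder {V : Type*} [LinearOrder V] {α : V → ℕ} :
    LinearOrder (Σ i, Fin (α i)) :=
  LinearOrder.lift' (toLex : (Σ i, Fin (α i)) → Σₗ i, Fin (α i)) toLex.injective

namespace AbstractComplex

variable {V : Type*}

/-- Two vertices are equivalent iff they lie in exactly the same facets. -/
def contractSetoid (Δ : AbstractComplex V) : Setoid V where
  r x y := ∀ F : Finset V, Δ.IsFacet F → (x ∈ F ↔ y ∈ F)
  iseqv := ⟨fun _ _ _ => Iff.rfl, fun h F hF => (h F hF).symm,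
    fun h1 h2 F hF => (h1 F hF).trans (h2 F hF)⟩

/-- The contraction of `Δ`: the complex on the equivalence classes of vertices,
whose facets are the images of the facets of `Δ`. -/
def contraction (Δ : AbstractComplex V) : AbstractComplex (Quotient Δ.contractSetoid) where
  faces := {σ | ∃ F : Finset V, Δ.IsFacet F ∧
    ∀ y ∈ σ, ∃ x ∈ F, Quotient.mk Δ.contractSetoid x = y}
  down_closed := fun ⟨F, hF, h⟩ hts => ⟨F, hF, fun y hy => h y (hts hy)⟩

/-- The size of an equivalence class of vertices: the components of the vector
obtained from contraction. -/
noncomputable def classSize (Δ : AbstractComplex V) (y : Quotient Δ.contractSetoid) : ℕ :=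
  Nat.card {x : V // Quotient.mk Δ.contractSetoid x = y}

end AbstractComplex

noncomputable instance quotLinearOrder {V : Type*} [LinearOrder V] {s : Setoid V} :
    LinearOrder (Quotient s) :=
  LinearOrder.lift' Quotient.out Quotient.out_injective


/-!
For a nonempty face `G` of the contraction `Γ`, the union `W` of the classes in `G` is a face of
`Δ` with `|W| ≥ t`, so `link_Δ W` is Cohen–Macaulay and in particular acyclic below its
dimension. Picking a representative of each class embeds `link_Γ G` into `link_Δ W`, and sending
each vertex to its class maps `link_Δ W` back onto `link_Γ G`; the composite is the identity.
Both are simplicial maps, so on oriented chains they induce chain maps (a vertex map that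
collapses a simplex kills it), and the reduced homology of `link_Γ G` is a retract of that of
`link_Δ W`, hence vanishes below its dimension, which is at most that of `link_Δ W`.
-/

lemma image_erase_of_injOn {V Q : Type*} [DecidableEq V] [DecidableEq Q] {f : V → Q}
    {s : Finset V} (hf : Set.InjOn f s) {x : V} (hx : x ∈ s) :
    (s.erase x).image f = (s.image f).erase (f x) := by
  ext c
  simp only [mem_image, mem_erase]
  constructor
  · rintro ⟨y, ⟨hyx, hy⟩, rfl⟩
    exact ⟨fun h => hyx (hf hy hx h), y, hy, rfl⟩
  · rintro ⟨hc, y, hy, rfl⟩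
    exact ⟨y, ⟨fun h => hc (h ▸ rfl), hy⟩, rfl⟩

lemma image_erase_eq_of_apply_eq {V Q : Type*} [DecidableEq V] [DecidableEq Q] {f : V → Q}
    {s : Finset V} {a b : V} (ha : a ∈ s) (hb : b ∈ s) (hfab : f a = f b) :
    (s.erase a).image f = (s.erase b).image f := by
  rcases eq_or_ne a b with rfl | hne
  · rfl
  rw [← insert_erase (mem_erase.mpr ⟨hne.symm, hb⟩), ← insert_erase (mem_erase.mpr ⟨hne, ha⟩),
    image_insert, image_insert, erase_right_comm, hfab]

lemma neg_one_pow_card_filter {V R : Type*} [CommRing R] (s : Finset V) (p : V → Prop)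
    [DecidablePred p] : (-1 : R) ^ #{y ∈ s | p y} = ∏ y ∈ s, if p y then -1 else 1 := by
  rw [prod_ite, prod_const, prod_const_one, mul_one]

section Inversions

variable {V Q : Type*} [LinearOrder V] [LinearOrder Q]

def inversions (f : V → Q) (s : Finset V) : ℕ :=
  ∑ x ∈ s, #{y ∈ s | x < y ∧ f y < f x}

lemma inversions_eq_zero_of_monotoneOn {f : V → Q} {s : Finset V} (hf : MonotoneOn f s) :
    inversions f s = 0 :=
  sum_eq_zero fun _ hx => card_eq_zero.mpr <| filter_eq_empty_iff.mpr
    fun _ hy h => (hf hx hy h.1.le).not_gt h.2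

lemma filter_erase_eq_filter {s : Finset V} {p : V → Prop} [DecidablePred p] {a : V}
    (ha : ¬ p a) : {y ∈ s.erase a | p y} = {y ∈ s | p y} := by
  rw [filter_erase, erase_eq_of_notMem (by simp [ha])]

lemma inversions_erase (f : V → Q) {s : Finset V} {a : V} (ha : a ∈ s) :
    inversions f s = inversions f (s.erase a)
      + #{y ∈ s.erase a | y < a ∧ f a < f y} + #{y ∈ s.erase a | a < y ∧ f y < f a} := by
  have hx : ∀ x ∈ s.erase a, #{y ∈ s | x < y ∧ f y < f x}
      = #{y ∈ s.erase a | x < y ∧ f y < f x} + if x < a ∧ f a < f x then 1 else 0 := by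
    intro x hx
    conv_lhs => rw [← insert_erase ha, filter_insert]
    split_ifs
    · exact card_insert_of_notMem (by simp)
    · rfl
  rw [inversions, ← sum_erase_add _ _ ha, sum_congr rfl hx, sum_add_distrib, ← card_filter,
    filter_erase_eq_filter (p := fun y => a < y ∧ f y < f a) (by simp), inversions]

variable {R : Type*} [CommRing R] {f : V → Q} {s : Finset V}

/-- Deleting a vertex `x` changes the number of inversions by the number of vertices `y` on
whose relative order with `x` the map `f` disagrees; modulo 2 that is the sum of the positions
of `x` in `s` and of `f x` in `f '' s`. -/
lemma neg_one_pow_inversions_erase_of_injOn (hinj : Set.InjOn f s) {x : V} (hx : x ∈ s) :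
    (-1 : R) ^ #{y ∈ s | y < x} * (-1) ^ inversions f (s.erase x)
      = (-1) ^ inversions f s * (-1) ^ #{y ∈ s | f y < f x} := by
  suffices h : (-1 : R) ^ #{y ∈ s.erase x | y < x} = (-1) ^ #{y ∈ s.erase x | y < x ∧ f x < f y}
      * (-1) ^ #{y ∈ s.erase x | x < y ∧ f y < f x} * (-1) ^ #{y ∈ s.erase x | f y < f x} by
    rw [inversions_erase f hx, ← filter_erase_eq_filter (p := (· < x)) (lt_irrefl x),
      ← filter_erase_eq_filter (p := fun y => f y < f x) (lt_irrefl _), h]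
    ring
  simp only [neg_one_pow_card_filter, ← prod_mul_distrib]
  refine prod_congr rfl fun y hy => ?_
  obtain ⟨hyx, hys⟩ := mem_erase.mp hy
  have hfyx : f y ≠ f x := fun h => hyx (hinj hys hx h)
  rcases hyx.lt_or_gt with h | h <;> rcases hfyx.lt_or_gt with h' | h' <;>
    simp [h, h', h.not_gt, h'.not_gt]

/-- This is why a simplex collapsed by `f` has boundary mapped to `0`: only its faces `s - a` and
`s - b` survive, with opposite signs. -/
lemma neg_one_pow_inversions_erase_pair {a b : V} (ha : a ∈ s) (hb : b ∈ s) (hab : a < b)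
    (hfab : f a = f b) (hinj : Set.InjOn f (s.erase a)) :
    (-1 : R) ^ #{y ∈ s | y < a} * (-1) ^ inversions f (s.erase a)
      + (-1) ^ #{y ∈ s | y < b} * (-1) ^ inversions f (s.erase b) = 0 := by
  have hba : b ∈ s.erase a := mem_erase.mpr ⟨hab.ne', hb⟩
  have hab' : a ∈ s.erase b := mem_erase.mpr ⟨hab.ne, ha⟩
  set t := (s.erase a).erase b
  have hposa : #{y ∈ s | y < a} = #{y ∈ t | y < a} := by
    rw [filter_erase_eq_filter (p := (· < a)) hab.not_gt,
      filter_erase_eq_filter (p := (· < a)) (lt_irrefl a)]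
  have hposb : #{y ∈ s | y < b} = #{y ∈ t | y < b} + 1 := by
    rw [← filter_erase_eq_filter (p := (· < b)) (lt_irrefl b), ← insert_erase hab',
      filter_insert, if_pos hab, card_insert_of_notMem (by simp), erase_right_comm]
  suffices h : (-1 : R) ^ #{y ∈ t | y < a} * (-1) ^ #{y ∈ t | y < b ∧ f b < f y}
      * (-1) ^ #{y ∈ t | b < y ∧ f y < f b} = (-1) ^ #{y ∈ t | y < b}
      * (-1) ^ #{y ∈ t | y < a ∧ f a < f y} * (-1) ^ #{y ∈ t | a < y ∧ f y < f a} by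
    rw [inversions_erase f hba, inversions_erase f hab', erase_right_comm (a := b), hposa, hposb]
    linear_combination (-1 : R) ^ inversions f t * h
  simp only [neg_one_pow_card_filter, ← prod_mul_distrib]
  refine prod_congr rfl fun y hy => ?_
  obtain ⟨hyb, hya, hys⟩ : y ≠ b ∧ y ≠ a ∧ y ∈ s := by simpa [t] using hy
  have hfyb : f y ≠ f b := fun h => hyb (hinj (mem_erase.mpr ⟨hya, hys⟩) hba h)
  rw [← hfab] at hfyb ⊢
  rcases hya.lt_or_gt with h | h <;> rcases hyb.lt_or_gt with h' | h' <;>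
    rcases hfyb.lt_or_gt with h'' | h'' <;>
    simp [h, h', h'', h.not_gt, h'.not_gt, h''.not_gt]

end Inversions

namespace AbstractComplex

section Chains

variable {V Q : Type*} (K : Type*) [Field K]

open Classical in
/-- The basis chain of `s`, read as `0` unless `s` is a face of cardinality `q`. -/
noncomputable def basisChain (A : AbstractComplex V) (q : ℕ) (s : Finset V) : A.Face q →₀ K :=
  if h : s ∈ A.faces ∧ s.card = q then Finsupp.single ⟨s, h⟩ 1 else 0

variable {K} {A : AbstractComplex V} {q : ℕ}

lemma basisChain_coe (σ : A.Face q) : A.basisChain K q σ.1 = Finsupp.single σ 1 := by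
  rw [basisChain, dif_pos σ.2]

lemma basisChain_of_card_ne {s : Finset V} (h : s.card ≠ q) : A.basisChain K q s = 0 := by
  rw [basisChain, dif_neg fun h' => h h'.2]

lemma boundary_basisChain [LinearOrder V] {s : Finset V} (hs : s ∈ A.faces)
    (hcard : s.card = q + 1) :
    A.boundary K q (A.basisChain K (q + 1) s)
      = ∑ x ∈ s, (-1 : K) ^ #{y ∈ s | y < x} • A.basisChain K q (s.erase x) := by
  rw [basisChain, dif_pos ⟨hs, hcard⟩, boundary, Finsupp.lsum_single,
    LinearMap.toSpanSingleton_apply, one_smul, ← sum_attach s]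
  refine sum_congr rfl fun x _ => ?_
  rw [basisChain, dif_pos]

lemma dimLT_of_injective [DecidableEq Q] {B : AbstractComplex Q} {f : V → Q}
    (hf : ∀ σ ∈ A.faces, σ.image f ∈ B.faces) (hinj : Function.Injective f) {i : ℤ} :
    A.dimLT i → B.dimLT i
  | ⟨s, hs, hcard⟩ => ⟨s.image f, hf s hs, by rwa [card_image_of_injective s hinj]⟩

lemma link_empty [DecidableEq V] (A : AbstractComplex V) : A.link ∅ = A := by
  cases A
  simp [link]

lemma exists_isFacet_superset [Finite V] {s : Finset V} (hs : s ∈ A.faces) :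
    ∃ F, A.IsFacet F ∧ s ⊆ F := by
  obtain ⟨F, hsF, hF⟩ := Finite.exists_le_maximal (p := (· ∈ A.faces)) hs
  exact ⟨F, ⟨hF.1, fun t ht hFt => le_antisymm hFt (hF.2 ht hFt)⟩, hsF⟩

variable [LinearOrder V] [LinearOrder Q]

variable (K) in
/-- `(-1) ^ inversions f σ` is the sign of the permutation sorting the images under `f` of the
vertices of `σ`, which are listed in increasing order. -/
noncomputable def chainMap (A : AbstractComplex V) (B : AbstractComplex Q) (f : V → Q)
    (q : ℕ) : (A.Face q →₀ K) →ₗ[K] (B.Face q →₀ K) :=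
  Finsupp.linearCombination K fun σ =>
    (-1 : K) ^ inversions f σ.1 • B.basisChain K q (σ.1.image f)

variable {B : AbstractComplex Q} {f : V → Q}

lemma chainMap_basisChain {s : Finset V} (hs : s ∈ A.faces) (hcard : s.card = q) :
    chainMap K A B f q (A.basisChain K q s)
      = (-1 : K) ^ inversions f s • B.basisChain K q (s.image f) := by
  rw [basisChain, dif_pos ⟨hs, hcard⟩, chainMap, Finsupp.linearCombination_single, one_smul]

lemma sum_basisChain_image_erase_of_injOn (hf : ∀ σ ∈ A.faces, σ.image f ∈ B.faces)
    {s : Finset V} (hs : s ∈ A.faces) (hcard : s.card = q + 1) (hinj : Set.InjOn f s) :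
    ∑ x ∈ s, ((-1 : K) ^ #{y ∈ s | y < x} * (-1) ^ inversions f (s.erase x))
        • B.basisChain K q ((s.erase x).image f)
      = (-1 : K) ^ inversions f s • B.boundary K q (B.basisChain K (q + 1) (s.image f)) := by
  rw [boundary_basisChain (hf s hs) (by rw [card_image_of_injOn hinj, hcard]),
    sum_image fun x hx y hy h => hinj hx hy h, smul_sum]
  refine sum_congr rfl fun x hx => ?_
  rw [neg_one_pow_inversions_erase_of_injOn hinj hx, image_erase_of_injOn hinj hx, smul_smul,
    filter_image, card_image_of_injOn (hinj.mono (filter_subset _ s))]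

lemma sum_basisChain_image_erase_of_not_injOn {s : Finset V} (hcard : s.card = q + 1)
    (hinj : ¬ Set.InjOn f s) :
    ∑ x ∈ s, ((-1 : K) ^ #{y ∈ s | y < x} * (-1) ^ inversions f (s.erase x))
        • B.basisChain K q ((s.erase x).image f) = 0 := by
  obtain ⟨a, ha, b, hb, hab, hfab⟩ : ∃ a ∈ s, ∃ b ∈ s, a < b ∧ f a = f b := by
    simp only [Set.InjOn, not_forall] at hinj
    obtain ⟨a, ha, b, hb, hfab, hne⟩ := hinj
    rcases Ne.lt_or_gt hne with h | h
    · exact ⟨a, ha, b, hb, h, hfab⟩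
    · exact ⟨b, hb, a, ha, h, hfab.symm⟩
  have hcard_erase : ∀ x ∈ s, #(s.erase x) = q := fun x hx => by
    rw [card_erase_of_mem hx, hcard, Nat.add_sub_cancel]
  have hinj_erase : ∀ x ∈ s, #((s.erase x).image f) = q → Set.InjOn f (s.erase x) :=
    fun x hx h => card_image_iff.mp (h.trans (hcard_erase x hx).symm)
  have hother : ∀ x ∈ s, x ∉ ({a, b} : Finset V) →
      ((-1 : K) ^ #{y ∈ s | y < x} * (-1) ^ inversions f (s.erase x))
        • B.basisChain K q ((s.erase x).image f) = 0 := by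
    intro x hx hxab
    obtain ⟨hxa, hxb⟩ : x ≠ a ∧ x ≠ b := by simpa [eq_comm] using hxab
    rw [basisChain_of_card_ne fun h => hab.ne <| hinj_erase x hx h
      (mem_erase.mpr ⟨hxa.symm, ha⟩) (mem_erase.mpr ⟨hxb.symm, hb⟩) hfab, smul_zero]
  rw [← sum_subset (insert_subset ha (singleton_subset_iff.mpr hb)) hother, sum_pair hab.ne,
    image_erase_eq_of_apply_eq ha hb hfab, ← add_smul]
  by_cases himage : #((s.erase b).image f) = q
  · rw [← image_erase_eq_of_apply_eq ha hb hfab] at himage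
    rw [neg_one_pow_inversions_erase_pair ha hb hab hfab (hinj_erase a ha himage), zero_smul]
  · rw [basisChain_of_card_ne himage, smul_zero]

theorem boundary_comp_chainMap (hf : ∀ σ ∈ A.faces, σ.image f ∈ B.faces) (q : ℕ) :
    (B.boundary K q).comp (chainMap K A B f (q + 1))
      = (chainMap K A B f q).comp (A.boundary K q) := by
  ext σ : 2
  obtain ⟨hs, hcard⟩ := σ.2
  simp only [LinearMap.comp_apply, Finsupp.lsingle_apply]
  rw [← basisChain_coe, boundary_basisChain hs hcard, map_sum, chainMap_basisChain hs hcard,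
    map_smul]
  have hterm : ∀ x ∈ σ.1, chainMap K A B f q ((-1 : K) ^ #{y ∈ σ.1 | y < x}
      • A.basisChain K q (σ.1.erase x)) = ((-1 : K) ^ #{y ∈ σ.1 | y < x}
        * (-1) ^ inversions f (σ.1.erase x)) • B.basisChain K q ((σ.1.erase x).image f) :=
    fun x hx => by
      rw [map_smul, chainMap_basisChain (A.down_closed hs (erase_subset x σ.1))
        (by rw [card_erase_of_mem hx, hcard, Nat.add_sub_cancel]), smul_smul]
  rw [sum_congr rfl hterm]
  by_cases hinj : Set.InjOn f σ.1
  · exact (sum_basisChain_image_erase_of_injOn hf hs hcard hinj).symm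
  · rw [sum_basisChain_image_erase_of_not_injOn hcard hinj, basisChain_of_card_ne, map_zero,
      smul_zero]
    exact fun h => hinj (card_image_iff.mp (h.trans hcard.symm))

lemma chainMap_chainMap_of_leftInverse {g : Q → V} (hf : ∀ σ ∈ A.faces, σ.image f ∈ B.faces)
    (hmono : StrictMono f) (hgf : Function.LeftInverse g f) (z : A.Face q →₀ K) :
    chainMap K B A g q (chainMap K A B f q z) = z := by
  suffices h : (chainMap K B A g q).comp (chainMap K A B f q) = LinearMap.id from
    LinearMap.congr_fun h z
  ext σ : 2
  obtain ⟨hs, hcard⟩ := σ.2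
  have hg : MonotoneOn g (σ.1.image f) := by
    rintro _ hx _ hy hxy
    obtain ⟨x, -, rfl⟩ := mem_image.mp hx
    obtain ⟨y, -, rfl⟩ := mem_image.mp hy
    rw [hgf x, hgf y]
    exact hmono.le_iff_le.mp hxy
  simp only [LinearMap.comp_apply, Finsupp.lsingle_apply, LinearMap.id_apply]
  rw [← basisChain_coe, chainMap_basisChain hs hcard,
    inversions_eq_zero_of_monotoneOn (hmono.monotone.monotoneOn _), pow_zero, one_smul,
    chainMap_basisChain (hf _ hs) (by rw [card_image_of_injective _ hmono.injective, hcard]),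
    inversions_eq_zero_of_monotoneOn hg, pow_zero, one_smul, image_image, hgf.comp_eq_id,
    image_id]

theorem rhTriv_of_retract {g : Q → V} (hf : ∀ σ ∈ A.faces, σ.image f ∈ B.faces)
    (hg : ∀ σ ∈ B.faces, σ.image g ∈ A.faces) (hmono : StrictMono f)
    (hgf : Function.LeftInverse g f) {i : ℤ} (h : B.RHTriv K i) : A.RHTriv K i := by
  have hretract := fun q => chainMap_chainMap_of_leftInverse (K := K) (q := q) hf hmono hgf
  match i, h with
  | .ofNat n, h =>
    intro z hz
    obtain ⟨w, hw⟩ := h (show chainMap K A B f (n + 1) z ∈ LinearMap.ker (B.boundary K n) by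
      rw [LinearMap.mem_ker, ← LinearMap.comp_apply, boundary_comp_chainMap hf,
        LinearMap.comp_apply, LinearMap.mem_ker.mp hz, map_zero])
    refine ⟨chainMap K B A g (n + 2) w, ?_⟩
    rw [← LinearMap.comp_apply, boundary_comp_chainMap hg, LinearMap.comp_apply, hw, hretract]
  | .negSucc 0, h =>
    intro z _
    obtain ⟨w, hw⟩ := h (Submodule.mem_top (x := chainMap K A B f 0 z))
    refine ⟨chainMap K B A g 1 w, ?_⟩
    rw [← LinearMap.comp_apply, boundary_comp_chainMap hg, LinearMap.comp_apply, hw, hretract]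
  | .negSucc (_ + 1), _ => trivial

end Chains

section Contraction

variable {V : Type*} [Fintype V] [LinearOrder V] (Δ : AbstractComplex V)
  {G : Finset (Quotient Δ.contractSetoid)}

/-- The face `⋃_{ȳ ∈ G} ȳ` of `Δ` lying over a face `G` of the contraction. -/
noncomputable def classUnion (G : Finset (Quotient Δ.contractSetoid)) : Finset V :=
  {x | Quotient.mk _ x ∈ G}

variable {Δ}

lemma classUnion_subset_of_isFacet {F : Finset V} (hF : Δ.IsFacet F)
    (hG : ∀ y ∈ G, ∃ x ∈ F, Quotient.mk _ x = y) : Δ.classUnion G ⊆ F := by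
  intro x hx
  obtain ⟨x', hx'F, hx'⟩ := hG _ (mem_filter.mp hx).2
  exact (Quotient.exact hx' F hF).mp hx'F

lemma classUnion_mem_faces (hG : G ∈ Δ.contraction.faces) : Δ.classUnion G ∈ Δ.faces :=
  let ⟨_, hF, hGF⟩ := hG
  Δ.down_closed hF.1 (classUnion_subset_of_isFacet hF hGF)

lemma classSize_le_card_classUnion {y : Quotient Δ.contractSetoid} (hy : y ∈ G) :
    Δ.classSize y ≤ #(Δ.classUnion G) := by
  rw [classSize, Nat.card_eq_fintype_card, Fintype.card_subtype]
  exact card_le_card fun x hx => mem_filter.mpr ⟨mem_univ x, (mem_filter.mp hx).2 ▸ hy⟩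

lemma image_out_mem_link (τ : Finset (Quotient Δ.contractSetoid))
    (hτ : τ ∈ (Δ.contraction.link G).faces) :
    τ.image Quotient.out ∈ (Δ.link (Δ.classUnion G)).faces := by
  obtain ⟨hdisj, F, hF, hτG⟩ := hτ
  refine ⟨eq_empty_iff_forall_notMem.mpr fun x hx => ?_, Δ.down_closed hF.1 (union_subset ?_ ?_)⟩
  · obtain ⟨hxτ, hxG⟩ := mem_inter.mp hx
    obtain ⟨c, hc, rfl⟩ := mem_image.mp hxτ
    have hcG : c ∈ G := by simpa [classUnion] using hxG
    simpa [hdisj] using mem_inter.mpr ⟨hc, hcG⟩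
  · intro x hx
    obtain ⟨c, hc, rfl⟩ := mem_image.mp hx
    obtain ⟨x, hxF, hxc⟩ := hτG c (mem_union_left _ hc)
    exact (Quotient.exact (hxc.trans (Quotient.out_eq c).symm) F hF).mp hxF
  · exact classUnion_subset_of_isFacet hF fun y hy => hτG y (mem_union_right _ hy)

lemma image_mk_mem_link (σ : Finset V) (hσ : σ ∈ (Δ.link (Δ.classUnion G)).faces) :
    σ.image (Quotient.mk _) ∈ (Δ.contraction.link G).faces := by
  obtain ⟨hdisj, hσW⟩ := hσ
  obtain ⟨F, hF, hσF⟩ := Δ.exists_isFacet_superset hσW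
  refine ⟨eq_empty_iff_forall_notMem.mpr fun y hy => ?_, F, hF, fun y hy => ?_⟩
  · obtain ⟨hyσ, hyG⟩ := mem_inter.mp hy
    obtain ⟨x, hx, rfl⟩ := mem_image.mp hyσ
    have hxW : x ∈ Δ.classUnion G := by simpa [classUnion] using hyG
    simpa [hdisj] using mem_inter.mpr ⟨hx, hxW⟩
  · rcases mem_union.mp hy with hy | hy
    · obtain ⟨x, hx, rfl⟩ := mem_image.mp hy
      exact ⟨x, hσF (mem_union_left _ hx), rfl⟩
    · refine ⟨y.out, hσF (mem_union_right _ ?_), Quotient.out_eq y⟩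
      simpa [classUnion] using hy

end Contraction

end AbstractComplex

/-- if `Δ` is `CM_t`, every component of the vector obtained from
contraction is at least `t`, and the contraction `Γ` is pure, then `Γ` is Buchsbaum. -/
theorem contraction_buchsbaum_of_cmt (K : Type*) [Field K] {V : Type*} [Fintype V]
    [LinearOrder V] (Δ : AbstractComplex V) (t : ℕ) (hΔ : Δ.IsCMt K t)
    (hk : ∀ y : Quotient Δ.contractSetoid, t ≤ Δ.classSize y)
    (hpure : Δ.contraction.IsPure) :
    AbstractComplex.IsBuchsbaum K Δ.contraction := by
  refine ⟨hpure, fun G hG hGne i hdim => ?_⟩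
  obtain ⟨y, hy⟩ := nonempty_iff_ne_empty.mpr hGne
  have hW := AbstractComplex.classUnion_mem_faces hG
  have hCM := hΔ.2 _ hW ((hk y).trans (AbstractComplex.classSize_le_card_classUnion hy))
  have hempty : ∅ ∈ (Δ.link (Δ.classUnion G)).faces := ⟨empty_inter _, by rwa [empty_union]⟩
  have hacyclic := hCM ∅ hempty i <| by
    rw [AbstractComplex.link_empty]
    exact AbstractComplex.dimLT_of_injective AbstractComplex.image_out_mem_link
      Quotient.out_injective hdim
  rw [AbstractComplex.link_empty] at hacyclic
  exact AbstractComplex.rhTriv_of_retract (f := Quotient.out)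
    AbstractComplex.image_out_mem_link AbstractComplex.image_mk_mem_link
    (fun _ _ h => h) Quotient.out_eq hacyclic -- classes are ordered by their `out`
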